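/- Under the following hypotheses: (i) the β-weighted decrease property — for every y ∈ X∞ there exists u ∈ U with A y + B u ∈ X∞ and β V_p(A y + B u) + ℓ(y,u) ≤ β V_p(y); (ii) V_p(y) ≤ α₂‖y‖² for all y with α₂ > 0; (iii) P ∈ ℝ^{n×n} is symmetric positive definite and satisfies xᵀPx ≤ ℓ(x,u) + (Ax+Bu)ᵀP(Ax+Bu) for all x, u; then there exist constants γ₁, γ₂ > 0 (one may take γ₁ the smallest eigenvalue of P and γ₂ = β α₂) such that γ₁‖x‖² ≤ V⁰_{N,β}(x) ≤ γ₂‖x‖² for every N ∈ ℕ and every x ∈ X∞, where V⁰_{N,β}(x) is the optimal value of the N-horizon problem with stage cost ℓ, terminal cost β V_p, and terminal constraint φ(N;x,u) ∈ X∞, and where in (i) the witnesses can be chosen with ‖u‖ ≤ c‖y‖ and V_p(A y + B u) ≤ λ² V_p(y) for some c > 0, λ ∈ [0,1), and α₁‖y‖² ≤ V_p(y) with α₁ > 0. -/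

import Mathlib

open scoped Matrix

/-- The state `φ(k; x, u)` of the linear system `x⁺ = A x + B u` at time `k`,
starting from `x(0) = x` under the control sequence `u`. -/
noncomputable def traj {n m : ℕ} (A : Matrix (Fin n) (Fin n) ℝ) (B : Matrix (Fin n) (Fin m) ℝ)
    (x : EuclideanSpace ℝ (Fin n)) (u : ℕ → EuclideanSpace ℝ (Fin m)) :
    ℕ → EuclideanSpace ℝ (Fin n)
  | 0 => x
  | k + 1 => (WithLp.toLp 2 (A.mulVec (traj A B x u k) + B.mulVec (u k)) : EuclideanSpace ℝ (Fin n))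

/-- The stage cost `ℓ(x,u) = xᵀQx + uᵀRu`. -/
noncomputable def stageCost {n m : ℕ} (Q : Matrix (Fin n) (Fin n) ℝ)
    (R : Matrix (Fin m) (Fin m) ℝ) (x : EuclideanSpace ℝ (Fin n))
    (u : EuclideanSpace ℝ (Fin m)) : ℝ :=
  (x : Fin n → ℝ) ⬝ᵥ Q.mulVec x + (u : Fin m → ℝ) ⬝ᵥ R.mulVec u

/-- The optimal value `V⁰_{N,β}(x)` of the `N`-horizon problem with stage cost `ℓ`,
terminal cost `β V_p`, and terminal constraint `φ(N; x, u) ∈ X∞`. -/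
noncomputable def V0 {n m : ℕ} (A : Matrix (Fin n) (Fin n) ℝ) (B : Matrix (Fin n) (Fin m) ℝ)
    (X : Set (EuclideanSpace ℝ (Fin n))) (U : Set (EuclideanSpace ℝ (Fin m)))
    (Xinf : Set (EuclideanSpace ℝ (Fin n)))
    (Q : Matrix (Fin n) (Fin n) ℝ) (R : Matrix (Fin m) (Fin m) ℝ)
    (Vp : EuclideanSpace ℝ (Fin n) → ℝ) (β : ℝ) (N : ℕ) (x : EuclideanSpace ℝ (Fin n)) : ℝ :=
  sInf {v : ℝ | ∃ u : ℕ → EuclideanSpace ℝ (Fin m),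
    (∀ k < N, u k ∈ U) ∧ (∀ k < N, traj A B x u k ∈ X) ∧ traj A B x u N ∈ Xinf ∧
    v = β * Vp (traj A B x u N) +
      ∑ k ∈ Finset.range N, stageCost Q R (traj A B x u k) (u k)}

/-!
Upper bound: using the decrease witnesses of (i) as a state feedback keeps the state in `X∞`, and
telescoping the decrease inequality along the closed loop gives a feasible sequence of cost at
most `β V_p(x) ≤ β α₂ ‖x‖²`. Lower bound: telescoping (iii) along an arbitrary trajectory gives
`xᵀPx ≤ Σ ℓ + φ(N)ᵀPφ(N)`. Since `ℓ ≥ 0` this persists when `P` is scaled by some `t ∈ (0, 1]`,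
and for `t` small `t yᵀPy ≤ β α₁ ‖y‖² ≤ β V_p(y)`, so every admissible cost is at least
`t xᵀPx`, which dominates a positive multiple of `‖x‖²` because `P` is positive definite.
-/

section Homogeneous

variable {E : Type*} [NormedAddCommGroup E] [NormedSpace ℝ E] {f : E → ℝ}

theorem apply_eq_norm_sq_mul_apply_inv_norm_smul (hf : ∀ (a : ℝ) x, f (a • x) = a ^ 2 * f x)
    (x : E) : f x = ‖x‖ ^ 2 * f (‖x‖⁻¹ • x) := by
  rcases eq_or_ne x 0 with rfl | hx
  · simpa using hf 0 0
  · rw [← hf, smul_inv_smul₀ (norm_ne_zero_iff.2 hx)]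

variable [FiniteDimensional ℝ E] (hcont : Continuous f)
  (hf : ∀ (a : ℝ) x, f (a • x) = a ^ 2 * f x)
include hcont hf

theorem exists_pos_mul_norm_sq_le (hpos : ∀ x ≠ 0, 0 < f x) :
    ∃ μ > 0, ∀ x, μ * ‖x‖ ^ 2 ≤ f x := by
  obtain ⟨μ, hμ, hμf⟩ := (isCompact_sphere (0 : E) 1).exists_forall_le' hcont.continuousOn
    fun y hy => hpos y (ne_zero_of_mem_unit_sphere ⟨y, hy⟩)
  refine ⟨μ, hμ, fun x => ?_⟩
  rw [apply_eq_norm_sq_mul_apply_inv_norm_smul hf x]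
  rcases eq_or_ne x 0 with rfl | hx
  · simp
  · rw [mul_comm]
    exact mul_le_mul_of_nonneg_left
      (hμf _ (by simpa using norm_smul_inv_norm (𝕜 := ℝ) hx)) (by positivity)

theorem exists_pos_le_mul_norm_sq : ∃ C > 0, ∀ x, f x ≤ C * ‖x‖ ^ 2 := by
  obtain ⟨C, hC⟩ := (isCompact_sphere (0 : E) 1).bddAbove_image hcont.continuousOn
  refine ⟨max C 1, by positivity, fun x => ?_⟩
  rw [apply_eq_norm_sq_mul_apply_inv_norm_smul hf x]
  rcases eq_or_ne x 0 with rfl | hx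
  · simp
  · rw [mul_comm]
    refine mul_le_mul_of_nonneg_right ((hC ⟨_, ?_, rfl⟩).trans (le_max_left _ _)) (by positivity)
    simpa using norm_smul_inv_norm (𝕜 := ℝ) hx

end Homogeneous

namespace Matrix

variable {ι : Type*} [Fintype ι]

theorem continuous_dotProduct_mulVec_self (P : Matrix ι ι ℝ) :
    Continuous fun y : EuclideanSpace ℝ ι => (y : ι → ℝ) ⬝ᵥ P *ᵥ y := by
  simp only [dotProduct, mulVec]
  fun_prop

theorem dotProduct_mulVec_self_smul (P : Matrix ι ι ℝ) (a : ℝ) (y : EuclideanSpace ℝ ι) :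
    ((a • y : EuclideanSpace ℝ ι) : ι → ℝ) ⬝ᵥ P *ᵥ (a • y : EuclideanSpace ℝ ι) =
      a ^ 2 * ((y : ι → ℝ) ⬝ᵥ P *ᵥ y) := by
  simp only [WithLp.ofLp_smul, mulVec_smul, smul_dotProduct, dotProduct_smul, smul_eq_mul]
  ring

theorem PosDef.exists_pos_mul_norm_sq_le_dotProduct_mulVec {P : Matrix ι ι ℝ} (hP : P.PosDef) :
    ∃ μ > 0, ∀ y : EuclideanSpace ℝ ι, μ * ‖y‖ ^ 2 ≤ (y : ι → ℝ) ⬝ᵥ P *ᵥ y :=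
  exists_pos_mul_norm_sq_le P.continuous_dotProduct_mulVec_self P.dotProduct_mulVec_self_smul
    fun y hy => by simpa using hP.dotProduct_mulVec_pos (WithLp.ofLp_injective 2 |>.ne hy)

theorem exists_pos_dotProduct_mulVec_le_mul_norm_sq (P : Matrix ι ι ℝ) :
    ∃ C > 0, ∀ y : EuclideanSpace ℝ ι, (y : ι → ℝ) ⬝ᵥ P *ᵥ y ≤ C * ‖y‖ ^ 2 :=
  exists_pos_le_mul_norm_sq P.continuous_dotProduct_mulVec_self P.dotProduct_mulVec_self_smul

end Matrix

section FiniteHorizon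

variable {n m : ℕ} (A : Matrix (Fin n) (Fin n) ℝ) (B : Matrix (Fin n) (Fin m) ℝ)
  (Q : Matrix (Fin n) (Fin n) ℝ) (R : Matrix (Fin m) (Fin m) ℝ)
  (Vp : EuclideanSpace ℝ (Fin n) → ℝ) (β : ℝ)

/-- The objective minimised in `V0`. -/
noncomputable def horizonCost (N : ℕ) (x : EuclideanSpace ℝ (Fin n))
    (u : ℕ → EuclideanSpace ℝ (Fin m)) : ℝ :=
  β * Vp (traj A B x u N) + ∑ k ∈ Finset.range N, stageCost Q R (traj A B x u k) (u k)

noncomputable def closedLoopTraj (κ : EuclideanSpace ℝ (Fin n) → EuclideanSpace ℝ (Fin m))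
    (x : EuclideanSpace ℝ (Fin n)) : ℕ → EuclideanSpace ℝ (Fin n)
  | 0 => x
  | k + 1 => WithLp.toLp 2 (A *ᵥ closedLoopTraj κ x k + B *ᵥ κ (closedLoopTraj κ x k))

theorem traj_succ (x : EuclideanSpace ℝ (Fin n)) (u : ℕ → EuclideanSpace ℝ (Fin m)) (k : ℕ) :
    traj A B x u (k + 1) = WithLp.toLp 2 (A *ᵥ traj A B x u k + B *ᵥ u k) :=
  rfl

theorem closedLoopTraj_succ (κ : EuclideanSpace ℝ (Fin n) → EuclideanSpace ℝ (Fin m))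
    (x : EuclideanSpace ℝ (Fin n)) (k : ℕ) :
    closedLoopTraj A B κ x (k + 1) =
      WithLp.toLp 2 (A *ᵥ closedLoopTraj A B κ x k + B *ᵥ κ (closedLoopTraj A B κ x k)) :=
  rfl

variable {A B Q R Vp β}

theorem stageCost_nonneg (hQ : Q.PosSemidef) (hR : R.PosSemidef)
    (x : EuclideanSpace ℝ (Fin n)) (u : EuclideanSpace ℝ (Fin m)) : 0 ≤ stageCost Q R x u := by
  have hx := hQ.dotProduct_mulVec_nonneg x
  have hu := hR.dotProduct_mulVec_nonneg u
  simp only [star_trivial] at hx hu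
  exact add_nonneg hx hu

theorem dotProduct_mulVec_le_sum_stageCost_add {P : Matrix (Fin n) (Fin n) ℝ}
    (hBellman : ∀ (x : EuclideanSpace ℝ (Fin n)) (u : EuclideanSpace ℝ (Fin m)),
      (x : Fin n → ℝ) ⬝ᵥ P *ᵥ x ≤ stageCost Q R x u + (A *ᵥ x + B *ᵥ u) ⬝ᵥ P *ᵥ (A *ᵥ x + B *ᵥ u))
    (N : ℕ) (x : EuclideanSpace ℝ (Fin n)) (u : ℕ → EuclideanSpace ℝ (Fin m)) :
    (x : Fin n → ℝ) ⬝ᵥ P *ᵥ x ≤ ∑ k ∈ Finset.range N, stageCost Q R (traj A B x u k) (u k) +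
      (traj A B x u N : Fin n → ℝ) ⬝ᵥ P *ᵥ traj A B x u N := by
  have hmono : Monotone fun N => ∑ k ∈ Finset.range N, stageCost Q R (traj A B x u k) (u k) +
      (traj A B x u N : Fin n → ℝ) ⬝ᵥ P *ᵥ traj A B x u N := by
    refine monotone_nat_of_le_succ fun k => ?_
    rw [Finset.sum_range_succ, traj_succ]
    linarith [hBellman (traj A B x u k) (u k)]
  simpa [traj] using hmono (Nat.zero_le N)

theorem exists_pos_mul_norm_sq_le_horizonCost (hQ : Q.PosSemidef) (hR : R.PosSemidef)
    {P : Matrix (Fin n) (Fin n) ℝ} (hP : P.PosDef)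
    (hBellman : ∀ (x : EuclideanSpace ℝ (Fin n)) (u : EuclideanSpace ℝ (Fin m)),
      (x : Fin n → ℝ) ⬝ᵥ P *ᵥ x ≤ stageCost Q R x u + (A *ᵥ x + B *ᵥ u) ⬝ᵥ P *ᵥ (A *ᵥ x + B *ᵥ u))
    {α₁ : ℝ} (hα₁ : 0 < α₁) (hβ : 0 < β) (hlow : ∀ y, α₁ * ‖y‖ ^ 2 ≤ Vp y) :
    ∃ γ > 0, ∀ N x u, γ * ‖x‖ ^ 2 ≤ horizonCost A B Q R Vp β N x u := by
  obtain ⟨μ, hμ, hμP⟩ := hP.exists_pos_mul_norm_sq_le_dotProduct_mulVec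
  obtain ⟨C, hC, hPC⟩ := P.exists_pos_dotProduct_mulVec_le_mul_norm_sq
  set t := min 1 (β * α₁ / C)
  have ht : 0 < t := by positivity
  have ht1 : t ≤ 1 := min_le_left _ _
  have htC : t * C ≤ β * α₁ := (le_div_iff₀ hC).1 (min_le_right _ _)
  refine ⟨t * μ, by positivity, fun N x u => ?_⟩
  set y := traj A B x u N
  set s := ∑ k ∈ Finset.range N, stageCost Q R (traj A B x u k) (u k)
  have hs : 0 ≤ s := Finset.sum_nonneg fun k _ => stageCost_nonneg hQ hR _ _
  have hterminal : t * ((y : Fin n → ℝ) ⬝ᵥ P *ᵥ y) ≤ β * Vp y :=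
    calc t * ((y : Fin n → ℝ) ⬝ᵥ P *ᵥ y) ≤ t * (C * ‖y‖ ^ 2) := by gcongr; exact hPC y
      _ ≤ (β * α₁) * ‖y‖ ^ 2 := by rw [← mul_assoc]; gcongr
      _ ≤ β * Vp y := by rw [mul_assoc]; gcongr; exact hlow y
  calc t * μ * ‖x‖ ^ 2 ≤ t * ((x : Fin n → ℝ) ⬝ᵥ P *ᵥ x) := by
        rw [mul_assoc]; gcongr; exact hμP x
    _ ≤ t * (s + (y : Fin n → ℝ) ⬝ᵥ P *ᵥ y) := by
        gcongr; exact dotProduct_mulVec_le_sum_stageCost_add hBellman N x u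
    _ ≤ β * Vp y + s := by nlinarith

variable {κ : EuclideanSpace ℝ (Fin n) → EuclideanSpace ℝ (Fin m)}

theorem traj_closedLoop (x : EuclideanSpace ℝ (Fin n)) :
    traj A B x (fun k => κ (closedLoopTraj A B κ x k)) = closedLoopTraj A B κ x := by
  funext k
  induction k with
  | zero => rfl
  | succ k ih => rw [traj_succ, ih, closedLoopTraj_succ]

theorem closedLoopTraj_mem {S : Set (EuclideanSpace ℝ (Fin n))}
    (hS : ∀ y ∈ S, WithLp.toLp 2 (A *ᵥ y + B *ᵥ κ y) ∈ S) {x} (hx : x ∈ S) (k : ℕ) :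
    closedLoopTraj A B κ x k ∈ S := by
  induction k with
  | zero => exact hx
  | succ k ih => exact hS _ ih

theorem horizonCost_closedLoop_le {S : Set (EuclideanSpace ℝ (Fin n))}
    (hS : ∀ y ∈ S, WithLp.toLp 2 (A *ᵥ y + B *ᵥ κ y) ∈ S)
    (hdec : ∀ y ∈ S,
      β * Vp (WithLp.toLp 2 (A *ᵥ y + B *ᵥ κ y)) + stageCost Q R y (κ y) ≤ β * Vp y)
    {x} (hx : x ∈ S) (N : ℕ) :
    horizonCost A B Q R Vp β N x (fun k => κ (closedLoopTraj A B κ x k)) ≤ β * Vp x := by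
  have hanti : Antitone fun N => β * Vp (closedLoopTraj A B κ x N) +
      ∑ k ∈ Finset.range N,
        stageCost Q R (closedLoopTraj A B κ x k) (κ (closedLoopTraj A B κ x k)) := by
    refine antitone_nat_of_succ_le fun k => ?_
    rw [Finset.sum_range_succ, closedLoopTraj_succ]
    linarith [hdec _ (closedLoopTraj_mem hS hx k)]
  simpa [horizonCost, traj_closedLoop, closedLoopTraj] using hanti (Nat.zero_le N)

variable {X : Set (EuclideanSpace ℝ (Fin n))} {U : Set (EuclideanSpace ℝ (Fin m))}
  {Xinf : Set (EuclideanSpace ℝ (Fin n))} {N : ℕ} {x : EuclideanSpace ℝ (Fin n)}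
  {u : ℕ → EuclideanSpace ℝ (Fin m)} {γ : ℝ}

theorem V0_le_horizonCost (hγ : ∀ u, γ ≤ horizonCost A B Q R Vp β N x u)
    (hU : ∀ k < N, u k ∈ U) (hX : ∀ k < N, traj A B x u k ∈ X) (hXinf : traj A B x u N ∈ Xinf) :
    V0 A B X U Xinf Q R Vp β N x ≤ horizonCost A B Q R Vp β N x u :=
  csInf_le ⟨γ, by rintro _ ⟨u, -, -, -, rfl⟩; exact hγ u⟩ ⟨u, hU, hX, hXinf, rfl⟩

theorem le_V0 (hγ : ∀ u, γ ≤ horizonCost A B Q R Vp β N x u)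
    (hU : ∀ k < N, u k ∈ U) (hX : ∀ k < N, traj A B x u k ∈ X) (hXinf : traj A B x u N ∈ Xinf) :
    γ ≤ V0 A B X U Xinf Q R Vp β N x :=
  le_csInf ⟨_, u, hU, hX, hXinf, rfl⟩ (by rintro _ ⟨u, -, -, -, rfl⟩; exact hγ u)

end FiniteHorizon

theorem stmt_10_general {n m : ℕ} (A : Matrix (Fin n) (Fin n) ℝ) (B : Matrix (Fin n) (Fin m) ℝ)
    (X : Set (EuclideanSpace ℝ (Fin n))) (U : Set (EuclideanSpace ℝ (Fin m)))
    (Q : Matrix (Fin n) (Fin n) ℝ) (R : Matrix (Fin m) (Fin m) ℝ)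
    (hQ : Q.PosSemidef) (hR : R.PosSemidef)
    (Xinf : Set (EuclideanSpace ℝ (Fin n)))
    (hXinf : Xinf = {x | ∃ u : ℕ → EuclideanSpace ℝ (Fin m),
      (∀ k, u k ∈ U) ∧ (∀ k, traj A B x u k ∈ X) ∧
      Filter.Tendsto (fun k => traj A B x u k) Filter.atTop (nhds 0)})
    (Vp : EuclideanSpace ℝ (Fin n) → ℝ) (α₁ α₂ lam c β : ℝ)
    (hα₁ : 0 < α₁) (hα₂ : 0 < α₂)
    (hβ : 0 < β)
    (hlow : ∀ y : EuclideanSpace ℝ (Fin n), α₁ * ‖y‖ ^ 2 ≤ Vp y)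
    (hupp : ∀ y : EuclideanSpace ℝ (Fin n), Vp y ≤ α₂ * ‖y‖ ^ 2)
    (hdec : ∀ y ∈ Xinf, ∃ u ∈ U, ‖u‖ ≤ c * ‖y‖ ∧
      (WithLp.toLp 2 (A.mulVec y + B.mulVec u) : EuclideanSpace ℝ (Fin n)) ∈ Xinf ∧
      Vp (WithLp.toLp 2 (A.mulVec y + B.mulVec u) : EuclideanSpace ℝ (Fin n)) ≤ lam ^ 2 * Vp y ∧
      β * Vp (WithLp.toLp 2 (A.mulVec y + B.mulVec u) : EuclideanSpace ℝ (Fin n)) + stageCost Q R y u ≤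
        β * Vp y)
    (P : Matrix (Fin n) (Fin n) ℝ) (hP : P.PosDef)
    (hBellman : ∀ (x : EuclideanSpace ℝ (Fin n)) (u : EuclideanSpace ℝ (Fin m)),
      (x : Fin n → ℝ) ⬝ᵥ P.mulVec x ≤ stageCost Q R x u +
        ((A.mulVec x + B.mulVec u : Fin n → ℝ)) ⬝ᵥ
          P.mulVec (A.mulVec x + B.mulVec u)) :
    ∃ γ₁ γ₂ : ℝ, 0 < γ₁ ∧ 0 < γ₂ ∧
      ∀ N : ℕ, ∀ x ∈ Xinf,
        γ₁ * ‖x‖ ^ 2 ≤ V0 A B X U Xinf Q R Vp β N x ∧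
          V0 A B X U Xinf Q R Vp β N x ≤ γ₂ * ‖x‖ ^ 2 := by
  obtain ⟨γ, hγ, hγcost⟩ := exists_pos_mul_norm_sq_le_horizonCost hQ hR hP hBellman hα₁ hβ hlow
  choose! κ hκU _ hκS _ hκdec using hdec
  have hXinfX : Xinf ⊆ X := by
    rw [hXinf]
    rintro y ⟨u, -, hX, -⟩
    exact hX 0
  refine ⟨γ, β * α₂, hγ, by positivity, fun N x hx => ?_⟩
  set u := fun k => κ (closedLoopTraj A B κ x k)
  have htraj : traj A B x u = closedLoopTraj A B κ x := traj_closedLoop x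
  have hz := closedLoopTraj_mem hκS hx
  have hU : ∀ k < N, u k ∈ U := fun k _ => hκU _ (hz k)
  have hX : ∀ k < N, traj A B x u k ∈ X := fun k _ => by rw [htraj]; exact hXinfX (hz k)
  have hN : traj A B x u N ∈ Xinf := by rw [htraj]; exact hz N
  refine ⟨le_V0 (hγcost N x) hU hX hN, ?_⟩
  calc V0 A B X U Xinf Q R Vp β N x ≤ horizonCost A B Q R Vp β N x u :=
        V0_le_horizonCost (hγcost N x) hU hX hN
    _ ≤ β * Vp x := horizonCost_closedLoop_le hκS hκdec hx N
    _ ≤ β * α₂ * ‖x‖ ^ 2 := by rw [mul_assoc]; gcongr; exact hupp x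

/-- Under (i) the `β`-weighted decrease property on the maximal
controllable set `X∞` (with witnesses `‖u‖ ≤ c‖y‖` and `V_p(Ay+Bu) ≤ λ² V_p(y)`),
(ii) the quadratic bounds `α₁‖y‖² ≤ V_p(y) ≤ α₂‖y‖²`, and (iii) a symmetric positive
definite `P` satisfying the Bellman-type inequality, there exist `γ₁, γ₂ > 0` such that
`γ₁‖x‖² ≤ V⁰_{N,β}(x) ≤ γ₂‖x‖²` for every horizon `N` and every `x ∈ X∞`. -/
theorem stmt_10 {n m : ℕ} (A : Matrix (Fin n) (Fin n) ℝ) (B : Matrix (Fin n) (Fin m) ℝ)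
    (X : Set (EuclideanSpace ℝ (Fin n))) (U : Set (EuclideanSpace ℝ (Fin m)))
    (Q : Matrix (Fin n) (Fin n) ℝ) (R : Matrix (Fin m) (Fin m) ℝ)
    (hQ : Q.PosSemidef) (hR : R.PosSemidef)
    (Xinf : Set (EuclideanSpace ℝ (Fin n)))
    (hXinf : Xinf = {x | ∃ u : ℕ → EuclideanSpace ℝ (Fin m),
      (∀ k, u k ∈ U) ∧ (∀ k, traj A B x u k ∈ X) ∧
      Filter.Tendsto (fun k => traj A B x u k) Filter.atTop (nhds 0)})
    (Vp : EuclideanSpace ℝ (Fin n) → ℝ) (α₁ α₂ lam c β : ℝ)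
    (hα₁ : 0 < α₁) (hα₂ : 0 < α₂) (hlam0 : 0 ≤ lam) (hlam1 : lam < 1)
    (hc : 0 < c) (hβ : 0 < β)
    (hlow : ∀ y : EuclideanSpace ℝ (Fin n), α₁ * ‖y‖ ^ 2 ≤ Vp y)
    (hupp : ∀ y : EuclideanSpace ℝ (Fin n), Vp y ≤ α₂ * ‖y‖ ^ 2)
    (hdec : ∀ y ∈ Xinf, ∃ u ∈ U, ‖u‖ ≤ c * ‖y‖ ∧
      (WithLp.toLp 2 (A.mulVec y + B.mulVec u) : EuclideanSpace ℝ (Fin n)) ∈ Xinf ∧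
      Vp (WithLp.toLp 2 (A.mulVec y + B.mulVec u) : EuclideanSpace ℝ (Fin n)) ≤ lam ^ 2 * Vp y ∧
      β * Vp (WithLp.toLp 2 (A.mulVec y + B.mulVec u) : EuclideanSpace ℝ (Fin n)) + stageCost Q R y u ≤
        β * Vp y)
    (P : Matrix (Fin n) (Fin n) ℝ) (hP : P.PosDef)
    (hBellman : ∀ (x : EuclideanSpace ℝ (Fin n)) (u : EuclideanSpace ℝ (Fin m)),
      (x : Fin n → ℝ) ⬝ᵥ P.mulVec x ≤ stageCost Q R x u +
        ((A.mulVec x + B.mulVec u : Fin n → ℝ)) ⬝ᵥ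
          P.mulVec (A.mulVec x + B.mulVec u)) :
    ∃ γ₁ γ₂ : ℝ, 0 < γ₁ ∧ 0 < γ₂ ∧
      ∀ N : ℕ, ∀ x ∈ Xinf,
        γ₁ * ‖x‖ ^ 2 ≤ V0 A B X U Xinf Q R Vp β N x ∧
          V0 A B X U Xinf Q R Vp β N x ≤ γ₂ * ‖x‖ ^ 2 :=
  stmt_10_general A B X U Q R hQ hR Xinf hXinf Vp α₁ α₂ lam c β hα₁ hα₂ hβ hlow hupp hdec P hP
    hBellman
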